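/- arXiv:1611.02008 — 3 statements merged into one kernel-verified Lean document; each statement's English description precedes it below -/
import Mathlib

section
/- Let α ≥ 0. For x ∈ ℝ≥0 define the evaluation functional δ_x(φ) = φ(x) on the weighted Sobolev space W^{1,α}₀(ℝ₊). Then δ_x is a continuous linear functional, and there is a constant C₁ (independent of x) such that ‖δ_x‖_{W^{-1,α}₀} ≤ C₁ (1 + x^α). -/
/-!
On a unit interval `[x, x + 1]` the fundamental theorem of calculus applied to `φ²` gives the
unweighted local Sobolev bound `φ(x)² ≤ 2 ∫ₓ^{x+1} (φ² + φ'²)`. On that interval the weight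
`1 + t^{2α}` is at most `(1 + 4^α)(1 + x^α)²`, so the local integral is controlled by
`(1 + 4^α)(1 + x^α)² ‖φ‖²_{1,α}`, whence `C₁ = √(2 (1 + 4^α))`.
-/

open MeasureTheory

/-- The weighted Sobolev norm `‖φ‖_{k,α}` on `ℝ₊`. -/
noncomputable def sobNorm (k : ℕ) (α : ℝ) (φ : ℝ → ℝ) : ℝ :=
  Real.sqrt (∑ j ∈ Finset.range (k + 1),
    ∫ x in Set.Ioi (0:ℝ), (iteratedDeriv j φ x) ^ 2 / (1 + x ^ (2 * α)))

open Set

theorem sq_le_sq_add_intervalIntegral {φ : ℝ → ℝ} (hφ : ContDiff ℝ 1 φ) {a b y : ℝ}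
    (hy : y ∈ Icc a b) :
    φ a ^ 2 ≤ φ y ^ 2 + ∫ t in a..b, (φ t ^ 2 + deriv φ t ^ 2) := by
  have hd : Continuous (deriv φ) := hφ.continuous_deriv le_rfl
  have hc : Continuous φ := hφ.continuous
  have ftc : ∫ t in a..y, 2 * φ t * deriv φ t = φ y ^ 2 - φ a ^ 2 :=
    intervalIntegral.integral_eq_sub_of_hasDerivAt (f := fun t => φ t ^ 2)
      (fun t _ => by simpa [Pi.pow_def] using ((hφ.differentiable one_ne_zero t).hasDerivAt.pow 2))
      ((by fun_prop : Continuous fun t => 2 * φ t * deriv φ t).intervalIntegrable _ _)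
  have hsq : Continuous fun t => φ t ^ 2 + deriv φ t ^ 2 := (hc.pow 2).add (hd.pow 2)
  have hneg : -∫ t in a..y, 2 * φ t * deriv φ t ≤ ∫ t in a..b, (φ t ^ 2 + deriv φ t ^ 2) :=
    calc -∫ t in a..y, 2 * φ t * deriv φ t
        = ∫ t in a..y, -(2 * φ t * deriv φ t) := intervalIntegral.integral_neg.symm
      _ ≤ ∫ t in a..y, (φ t ^ 2 + deriv φ t ^ 2) :=
        intervalIntegral.integral_mono_on hy.1
          ((by fun_prop : Continuous fun t => -(2 * φ t * deriv φ t)).intervalIntegrable _ _)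
          (hsq.intervalIntegrable _ _)
          fun t _ => by nlinarith [sq_nonneg (φ t + deriv φ t)]
      _ ≤ ∫ t in a..b, (φ t ^ 2 + deriv φ t ^ 2) :=
        intervalIntegral.integral_mono_interval le_rfl hy.1 hy.2
          (Filter.Eventually.of_forall fun t => by positivity) (hsq.intervalIntegrable _ _)
  linarith

theorem sq_le_two_mul_intervalIntegral {φ : ℝ → ℝ} (hφ : ContDiff ℝ 1 φ) (a : ℝ) :
    φ a ^ 2 ≤ 2 * ∫ t in a..a + 1, (φ t ^ 2 + deriv φ t ^ 2) := by
  have hd : Continuous (deriv φ) := hφ.continuous_deriv le_rfl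
  have hc : Continuous φ := hφ.continuous
  set I := ∫ t in a..a + 1, (φ t ^ 2 + deriv φ t ^ 2)
  have hab : a ≤ a + 1 := by linarith
  have averaged : φ a ^ 2 ≤ (∫ y in a..a + 1, φ y ^ 2) + I := by
    have h := intervalIntegral.integral_mono_on (μ := volume) hab intervalIntegrable_const
      (((hc.pow 2).intervalIntegrable _ _).add intervalIntegrable_const)
      fun y hy => sq_le_sq_add_intervalIntegral hφ hy
    rwa [intervalIntegral.integral_add ((hc.pow 2).intervalIntegrable _ _)
      intervalIntegrable_const, intervalIntegral.integral_const, intervalIntegral.integral_const,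
      add_sub_cancel_left, one_smul, one_smul] at h
  have hφI : ∫ y in a..a + 1, φ y ^ 2 ≤ I :=
    intervalIntegral.integral_mono_on hab ((hc.pow 2).intervalIntegrable _ _)
      (((hc.pow 2).add (hd.pow 2)).intervalIntegrable _ _)
      fun t _ => le_add_of_nonneg_right (sq_nonneg _)
  linarith

theorem rpow_add_one_le {α x : ℝ} (hα : 0 ≤ α) (hx : 0 ≤ x) :
    (x + 1) ^ α ≤ 2 ^ α * (1 + x ^ α) := by
  have hmax : max 1 x ^ α ≤ 1 + x ^ α := by
    rcases max_cases 1 x with ⟨h, -⟩ | ⟨h, -⟩ <;> rw [h]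
    · simp [Real.rpow_nonneg hx]
    · exact le_add_of_nonneg_left zero_le_one
  calc (x + 1) ^ α ≤ (2 * max 1 x) ^ α :=
        Real.rpow_le_rpow (by positivity) (by linarith [le_max_left 1 x, le_max_right 1 x]) hα
    _ = 2 ^ α * max 1 x ^ α := Real.mul_rpow zero_le_two (by positivity)
    _ ≤ 2 ^ α * (1 + x ^ α) := by gcongr

theorem one_add_rpow_two_mul_le {α x t : ℝ} (hα : 0 ≤ α) (hx : 0 ≤ x) (ht : t ∈ Icc x (x + 1)) :
    1 + t ^ (2 * α) ≤ (1 + 4 ^ α) * (1 + x ^ α) ^ 2 := by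
  have ht0 : 0 ≤ t := hx.trans ht.1
  have hsq : t ^ (2 * α) = (t ^ α) ^ 2 := by
    rw [mul_comm, ← Real.rpow_mul_natCast ht0]; norm_num
  have hfour : (4 : ℝ) ^ α = 2 ^ α * 2 ^ α := by
    rw [← Real.mul_rpow zero_le_two zero_le_two]; norm_num
  have hta : t ^ α ≤ 2 ^ α * (1 + x ^ α) :=
    (Real.rpow_le_rpow ht0 ht.2 hα).trans (rpow_add_one_le hα hx)
  have hxa : 1 ≤ (1 + x ^ α) ^ 2 := one_le_pow₀ (le_add_of_nonneg_right (Real.rpow_nonneg hx α))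
  rw [hsq, hfour]
  nlinarith [pow_le_pow_left₀ (Real.rpow_nonneg ht0 α) hta 2]

theorem integrableOn_sq_div_one_add_rpow {ψ : ℝ → ℝ} (hψ : Continuous ψ) (hs : HasCompactSupport ψ)
    (α : ℝ) : IntegrableOn (fun t => ψ t ^ 2 / (1 + t ^ (2 * α))) (Ioi 0) := by
  have hs2 : HasCompactSupport fun t => ψ t ^ 2 := hs.comp_left (g := fun y : ℝ => y ^ 2) (by norm_num)
  have hsq : Integrable fun t => ψ t ^ 2 := (hψ.pow 2).integrable_of_hasCompactSupport hs2
  refine hsq.integrableOn.mono' ?_ ?_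
  · exact ((hψ.measurable.pow_const 2).div
      (measurable_const.add (measurable_id.pow_const _))).aestronglyMeasurable
  · filter_upwards [ae_restrict_mem measurableSet_Ioi] with t ht
    have hw : 1 ≤ 1 + t ^ (2 * α) := le_add_of_nonneg_right (Real.rpow_nonneg (le_of_lt ht) _)
    rw [Real.norm_of_nonneg (div_nonneg (sq_nonneg _) (zero_le_one.trans hw))]
    exact div_le_self (sq_nonneg _) hw

theorem sobNorm_one_eq {α : ℝ} {φ : ℝ → ℝ} (hφ : ContDiff ℝ 1 φ) (hs : HasCompactSupport φ) :
    sobNorm 1 α φ = √(∫ t in Ioi 0, (φ t ^ 2 + deriv φ t ^ 2) / (1 + t ^ (2 * α))) := by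
  simp only [sobNorm, Finset.sum_range_succ, Finset.sum_range_zero, zero_add, iteratedDeriv_zero,
    iteratedDeriv_one, add_div]
  rw [integral_add (integrableOn_sq_div_one_add_rpow hφ.continuous hs α)
    (integrableOn_sq_div_one_add_rpow (hφ.continuous_deriv le_rfl) hs.deriv α)]

theorem integrableOn_sq_add_sq_deriv_div_one_add_rpow {φ : ℝ → ℝ} (hφ : ContDiff ℝ 1 φ)
    (hs : HasCompactSupport φ) (α : ℝ) :
    IntegrableOn (fun t => (φ t ^ 2 + deriv φ t ^ 2) / (1 + t ^ (2 * α))) (Ioi 0) := by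
  simp only [add_div]
  exact (integrableOn_sq_div_one_add_rpow hφ.continuous hs α).add
    (integrableOn_sq_div_one_add_rpow (hφ.continuous_deriv le_rfl) hs.deriv α)

theorem intervalIntegral_le_setIntegral_Ioi {f : ℝ → ℝ} {a b c : ℝ} (hca : c ≤ a) (hab : a ≤ b)
    (hf : IntegrableOn f (Ioi c)) (hf0 : ∀ t ∈ Ioi c, 0 ≤ f t) :
    ∫ t in a..b, f t ≤ ∫ t in Ioi c, f t := by
  have hsub : Ioc a b ⊆ Ioi c := fun t ht => lt_of_le_of_lt hca ht.1
  rw [intervalIntegral.integral_of_le hab]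
  refine setIntegral_mono_set hf ?_ hsub.eventuallyLE
  filter_upwards [ae_restrict_mem measurableSet_Ioi] with t ht using hf0 t ht

theorem sq_le_mul_setIntegral_Ioi {α x : ℝ} (hα : 0 ≤ α) (hx : 0 ≤ x) {φ : ℝ → ℝ}
    (hφ : ContDiff ℝ 1 φ) (hs : HasCompactSupport φ) :
    φ x ^ 2 ≤ 2 * ((1 + 4 ^ α) * (1 + x ^ α) ^ 2) *
      ∫ t in Ioi 0, (φ t ^ 2 + deriv φ t ^ 2) / (1 + t ^ (2 * α)) := by
  set K := (1 + 4 ^ α) * (1 + x ^ α) ^ 2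
  set g := fun t => (φ t ^ 2 + deriv φ t ^ 2) / (1 + t ^ (2 * α))
  have hg : IntegrableOn g (Ioi 0) := integrableOn_sq_add_sq_deriv_div_one_add_rpow hφ hs α
  have hg' : IntervalIntegrable g volume x (x + 1) :=
    (intervalIntegrable_iff_integrableOn_Ioc_of_le (by linarith)).2
      (hg.mono_set fun t ht => lt_of_le_of_lt hx ht.1)
  have hd : Continuous (deriv φ) := hφ.continuous_deriv le_rfl
  calc φ x ^ 2 ≤ 2 * ∫ t in x..x + 1, (φ t ^ 2 + deriv φ t ^ 2) :=
        sq_le_two_mul_intervalIntegral hφ x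
    _ ≤ 2 * ∫ t in x..x + 1, K * g t := by
        gcongr
        refine intervalIntegral.integral_mono_on (by linarith)
          (((hφ.continuous.pow 2).add (hd.pow 2)).intervalIntegrable _ _)
          (hg'.const_mul K) fun t ht => ?_
        have hwt : 0 < 1 + t ^ (2 * α) := by have := hx.trans ht.1; positivity
        rw [mul_div_assoc', le_div_iff₀ hwt, mul_comm K]
        exact mul_le_mul_of_nonneg_left (one_add_rpow_two_mul_le hα hx ht) (by positivity)
    _ = 2 * K * ∫ t in x..x + 1, g t := by rw [intervalIntegral.integral_const_mul]; ring
    _ ≤ 2 * K * ∫ t in Ioi 0, g t := by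
        gcongr
        refine intervalIntegral_le_setIntegral_Ioi hx (by linarith) hg fun t ht => ?_
        have : (0 : ℝ) ≤ t := le_of_lt ht
        positivity

/-- The evaluation functional `δ_x : φ ↦ φ(x)` is continuous on `W^{1,α}₀(ℝ₊)`,
with dual norm bounded by `C₁ (1 + x^α)` uniformly in `x ≥ 0`. -/
theorem evaluation_functional_bound (α : ℝ) (hα : 0 ≤ α) :
    ∃ C₁ : ℝ, 0 < C₁ ∧ ∀ x : ℝ, 0 ≤ x → ∀ φ : ℝ → ℝ,
      ContDiff ℝ (⊤ : ℕ∞) φ → HasCompactSupport φ →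
      |φ x| ≤ C₁ * (1 + x ^ α) * sobNorm 1 α φ := by
  refine ⟨√(2 * (1 + 4 ^ α)), by positivity, fun x hx φ hφ hs => ?_⟩
  have hφ1 : ContDiff ℝ 1 φ := hφ.of_le (by exact_mod_cast le_top)
  set S := ∫ t in Ioi 0, (φ t ^ 2 + deriv φ t ^ 2) / (1 + t ^ (2 * α))
  calc |φ x| = √(φ x ^ 2) := (Real.sqrt_sq_eq_abs _).symm
    _ ≤ √(2 * ((1 + 4 ^ α) * (1 + x ^ α) ^ 2) * S) :=
        Real.sqrt_le_sqrt (sq_le_mul_setIntegral_Ioi hα hx hφ1 hs)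
    _ = √(2 * (1 + 4 ^ α) * (1 + x ^ α) ^ 2 * S) := by congr 1; ring
    _ = √(2 * (1 + 4 ^ α)) * (1 + x ^ α) * sobNorm 1 α φ := by
        rw [Real.sqrt_mul (by positivity), Real.sqrt_mul (by positivity), Real.sqrt_sq (by positivity),
          sobNorm_one_eq hφ1 hs]
end

section
/- Let n ≥ k ≥ 1 be integers, let m ≤ n, and let X_1, …, X_m be exchangeable nonnegative integer-valued random variables. Then there exists a constant C depending only on k (not on n, m, or the law) such that E[( (1/m) Σ_{j=1}^m X_j )^k] ≤ C ( Σ_{k'=1}^{k−1} m^{k'−k} E[X_1^{k} X_2^{k} ⋯ X_{k'}^{k}] + E[X_1 X_2 ⋯ X_k] ), where for k' < k the expectation E[X_1^k ⋯ X_{k'}^k] involves the joint moments bounded by replacing each exponent by k. (More precisely: expanding by the multinomial formula, the terms with exactly k' distinct indices are bounded by p(k',k) k! m^{k'} E[Π_{i=1}^{k'} X_i^{q_i}] with Σ q_i = k, and each such expectation is at most E[Π_{i=1}^{k'} X_i^{k}].) -/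
/-!
Expanding the power, `(m⁻¹ ∑ⱼ Xⱼ)ᵏ = m⁻ᵏ ∑_g ∏ᵢ X_{g i}` over all maps `g : Fin k → Fin m`.
Since the `Xⱼ` are integers, `∏ᵢ X_{g i} ≤ ∏_{j ∈ im g} Xⱼᵏ`, and by exchangeability the
expectation of the right side depends only on `c = #(im g)`; at most `(m choose c) cᵏ ≤ mᶜ kᵏ`
maps have an image of size `c`. The injective maps (`c = k`) contribute exactly `E[X₁ ⋯ Xₖ]`,
again by exchangeability.
-/

open MeasureTheory Finset
open scoped ENNReal Pointwise

theorem Finset.exists_perm_smul_eq_of_card_eq {α : Type*} [DecidableEq α] {s t : Finset α}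
    (h : #s = #t) : ∃ σ : Equiv.Perm α, σ • s = t := by
  have := Set.powersetCard.isPretransitive (α := α) (n := #t)
  obtain ⟨σ, hσ⟩ := MulAction.exists_smul_eq (Equiv.Perm α)
    (⟨s, h⟩ : Set.powersetCard α #t) ⟨t, rfl⟩
  exact ⟨σ, congrArg Subtype.val hσ⟩

def IsExchangeable {ι Ω β : Type*} [MeasurableSpace Ω] [MeasurableSpace β]
    (P : Measure Ω) (X : ι → Ω → β) : Prop :=
  ∀ σ : Equiv.Perm ι, P.map (fun ω i => X (σ i) ω) = P.map (fun ω i => X i ω)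

namespace IsExchangeable

variable {ι Ω β : Type*} [MeasurableSpace Ω] [MeasurableSpace β] {P : Measure Ω}
  {X : ι → Ω → β}

theorem lintegral_comp_perm (hX : IsExchangeable P X) (hXm : ∀ i, Measurable (X i))
    (σ : Equiv.Perm ι) {F : (ι → β) → ℝ≥0∞} (hF : Measurable F) :
    ∫⁻ ω, F (fun i => X (σ i) ω) ∂P = ∫⁻ ω, F (fun i => X i ω) ∂P := by
  rw [← lintegral_map hF (measurable_pi_lambda _ fun i => hXm (σ i)),
    ← lintegral_map hF (measurable_pi_lambda _ hXm), hX σ]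

theorem lintegral_prod_eq_of_card_eq (hX : IsExchangeable P X) (hXm : ∀ i, Measurable (X i))
    {f : β → ℝ≥0∞} (hf : Measurable f) {s t : Finset ι} (hst : #s = #t) :
    ∫⁻ ω, ∏ j ∈ s, f (X j ω) ∂P = ∫⁻ ω, ∏ j ∈ t, f (X j ω) ∂P := by
  classical
  obtain ⟨σ, rfl⟩ := exists_perm_smul_eq_of_card_eq hst
  simp only [smul_finset_def, Equiv.Perm.smul_def]
  rw [← hX.lintegral_comp_perm hXm σ (F := fun x => ∏ j ∈ s, f (x j))
    (Finset.measurable_prod _ fun j _ => hf.comp (measurable_pi_apply j))]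
  simp_rw [prod_image fun i _ j _ h => σ.injective h]

theorem lintegral_prod_comp_eq (hX : IsExchangeable P X) (hXm : ∀ i, Measurable (X i))
    {f : β → ℝ≥0∞} (hf : Measurable f) {κ κ' : Type*} {s : Finset κ} {s' : Finset κ'}
    {φ : κ → ι} {φ' : κ' → ι} (hφ : Set.InjOn φ s) (hφ' : Set.InjOn φ' s') (h : #s = #s') :
    ∫⁻ ω, ∏ i ∈ s, f (X (φ i) ω) ∂P = ∫⁻ ω, ∏ i ∈ s', f (X (φ' i) ω) ∂P := by
  classical
  have hs (ω : Ω) : ∏ i ∈ s, f (X (φ i) ω) = ∏ j ∈ s.image φ, f (X j ω) :=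
    (prod_image (f := fun j => f (X j ω)) hφ).symm
  have hs' (ω : Ω) : ∏ i ∈ s', f (X (φ' i) ω) = ∏ j ∈ s'.image φ', f (X j ω) :=
    (prod_image (f := fun j => f (X j ω)) hφ').symm
  simp_rw [hs, hs']
  exact hX.lintegral_prod_eq_of_card_eq hXm hf
    (by rw [card_image_of_injOn hφ, card_image_of_injOn hφ', h])

end IsExchangeable

theorem lintegral_const_mul_sum_pow {ι Ω : Type*} [Fintype ι] [MeasurableSpace Ω]
    {P : Measure Ω} {Y : ι → Ω → ℝ≥0∞} (hY : ∀ i, Measurable (Y i)) (c : ℝ≥0∞) (k : ℕ) :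
    ∫⁻ ω, (c * ∑ j, Y j ω) ^ k ∂P = c ^ k * ∑ g : Fin k → ι, ∫⁻ ω, ∏ i, Y (g i) ω ∂P := by
  simp_rw [mul_pow, Fintype.sum_pow]
  rw [lintegral_const_mul _ (by fun_prop), lintegral_finsetSum _ fun g _ => by fun_prop]

theorem prod_comp_le_prod_image_pow {κ ι : Type*} [Fintype κ] [DecidableEq ι]
    (a : ι → ℕ) (g : κ → ι) {n : ℕ} (hn : Fintype.card κ ≤ n) :
    ∏ i, a (g i) ≤ ∏ j ∈ univ.image g, a j ^ n := by
  rw [prod_comp]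
  refine prod_le_prod' fun j hj => ?_
  have hpos : 0 < #{i | g i = j} := by
    obtain ⟨i, -, rfl⟩ := mem_image.1 hj
    exact card_pos.2 ⟨i, by simp⟩
  rcases (a j).eq_zero_or_pos with h | h
  · simp [h, hpos.ne']
  · exact Nat.pow_le_pow_right h ((card_le_univ _).trans hn)

theorem card_filter_card_image_eq_le {κ ι : Type*} [Fintype κ] [DecidableEq κ] [Fintype ι]
    [DecidableEq ι] (c : ℕ) :
    #{g : κ → ι | #(univ.image g) = c} ≤ (Fintype.card ι).choose c * c ^ Fintype.card κ := by
  have hsub : ({g : κ → ι | #(univ.image g) = c} : Finset _)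
      ⊆ (univ.powersetCard c).biUnion fun S => Fintype.piFinset fun _ : κ => S := by
    intro g hg
    rw [mem_filter] at hg
    exact mem_biUnion.2 ⟨univ.image g, mem_powersetCard.2 ⟨subset_univ _, hg.2⟩,
      Fintype.mem_piFinset.2 fun i => mem_image_of_mem g (mem_univ i)⟩
  calc _ ≤ _ := card_le_card hsub
    _ ≤ ∑ S ∈ univ.powersetCard c, #(Fintype.piFinset fun _ : κ => S) := card_biUnion_le
    _ = _ := by
      rw [sum_congr rfl fun S hS => by
        rw [Fintype.card_piFinset, prod_const, (mem_powersetCard.1 hS).2, card_univ]]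
      simp

theorem card_image_mem_Icc_of_not_injective {ι : Type*} [DecidableEq ι] {k : ℕ}
    {g : Fin k → ι} (hg : ¬ Function.Injective g) : #(univ.image g) ∈ Icc 1 (k - 1) := by
  obtain ⟨a, -⟩ : ∃ a b, g a = g b ∧ a ≠ b := by
    simpa [Function.Injective] using hg
  have hne : #(univ.image g) ≠ #(univ : Finset (Fin k)) := fun h =>
    hg (by simpa using card_image_iff.1 h)
  have hle : #(univ.image g) ≤ #(univ : Finset (Fin k)) := card_image_le
  have hpos : 0 < #(univ.image g) := card_pos.2 ⟨g a, mem_image_of_mem g (mem_univ a)⟩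
  simp only [card_univ, Fintype.card_fin] at hne hle
  exact mem_Icc.2 ⟨hpos, by omega⟩

theorem sum_le_of_le_card_image {ι : Type*} [Fintype ι] [DecidableEq ι] {k : ℕ}
    (I : (Fin k → ι) → ℝ≥0∞) (A : ℕ → ℝ≥0∞) (B : ℝ≥0∞)
    (hA : ∀ g, I g ≤ A #(univ.image g)) (hB : ∀ g, Function.Injective g → I g ≤ B) :
    ∑ g, I g ≤ ∑ c ∈ Icc 1 (k - 1), ((Fintype.card ι ^ c * k ^ k : ℕ) : ℝ≥0∞) * A c
      + ((Fintype.card ι ^ k : ℕ) : ℝ≥0∞) * B := by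
  classical
  rw [← sum_filter_not_add_sum_filter univ Function.Injective]
  gcongr ?_ + ?_
  · calc ∑ g ∈ univ with ¬ Function.Injective g, I g
        ≤ ∑ g ∈ univ with ¬ Function.Injective g, A #(univ.image g) := sum_le_sum fun g _ => hA g
      _ = ∑ c ∈ Icc 1 (k - 1), ∑ g ∈ univ with ¬ Function.Injective g ∧ #(univ.image g) = c,
            A c := by
        rw [← sum_fiberwise_of_maps_to fun g hg =>
          card_image_mem_Icc_of_not_injective (mem_filter.1 hg).2]
        refine sum_congr rfl fun c _ => ?_
        rw [filter_filter]
        exact sum_congr rfl fun g hg => by rw [(mem_filter.1 hg).2.2]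
      _ ≤ _ := by
        refine sum_le_sum fun c hc => ?_
        rw [sum_const, nsmul_eq_mul]
        gcongr
        calc #{g : Fin k → ι | ¬ Function.Injective g ∧ #(univ.image g) = c}
            ≤ #{g : Fin k → ι | #(univ.image g) = c} :=
              card_le_card (monotone_filter_right _ fun _ _ h => h.2)
          _ ≤ (Fintype.card ι).choose c * c ^ k := by
            simpa using card_filter_card_image_eq_le (κ := Fin k) (ι := ι) c
          _ ≤ Fintype.card ι ^ c * k ^ k := by
            gcongr
            · exact Nat.choose_le_pow _ _
            · exact (mem_Icc.1 hc).2.trans (Nat.sub_le k 1)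
  · calc ∑ g ∈ univ with Function.Injective g, I g
        ≤ ∑ g ∈ univ with Function.Injective g, B := sum_le_sum fun g hg => hB g (mem_filter.1 hg).2
      _ ≤ _ := by
        rw [sum_const, nsmul_eq_mul]
        gcongr
        exact (card_filter_le _ _).trans (by simp)

theorem inv_pow_mul_sum_le_of_le_card_image {ι : Type*} [Fintype ι] [DecidableEq ι]
    [Nonempty ι] {k : ℕ} (hk : 1 ≤ k) (I : (Fin k → ι) → ℝ≥0∞) (A : ℕ → ℝ≥0∞) (B : ℝ≥0∞)
    (hA : ∀ g, I g ≤ A #(univ.image g)) (hB : ∀ g, Function.Injective g → I g ≤ B) :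
    (Fintype.card ι : ℝ≥0∞)⁻¹ ^ k * ∑ g, I g ≤
      (k : ℝ≥0∞) ^ k * (∑ c ∈ Icc 1 (k - 1),
        (Fintype.card ι : ℝ≥0∞) ^ ((c : ℤ) - (k : ℤ)) * A c + B) := by
  set m := Fintype.card ι
  have hm0 : (m : ℝ≥0∞) ≠ 0 := by simp [m, Fintype.card_ne_zero]
  have hmtop : (m : ℝ≥0∞) ≠ ⊤ := ENNReal.natCast_ne_top m
  grw [sum_le_of_le_card_image I A B hA hB]
  rw [mul_add, mul_add, mul_sum, mul_sum]
  refine add_le_add (sum_le_sum fun c _ => le_of_eq ?_) ?_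
  · rw [ENNReal.zpow_sub hm0 hmtop, zpow_natCast, zpow_natCast, ENNReal.inv_pow]
    push_cast
    ring
  · rw [← mul_assoc, Nat.cast_pow, ← ENNReal.inv_pow,
      ENNReal.inv_mul_cancel (pow_ne_zero k hm0) (ENNReal.pow_ne_top hmtop), one_mul]
    exact le_mul_of_one_le_left' (one_le_pow₀ (by exact_mod_cast hk))

theorem injOn_mod_range {m c : ℕ} (hm : 0 < m) (hc : c ≤ m) :
    Set.InjOn (fun i => (⟨i % m, Nat.mod_lt i hm⟩ : Fin m)) (range c) := by
  intro i hi j hj hij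
  simp only [coe_range, Set.mem_Iio] at hi hj
  simpa [Nat.mod_eq_of_lt (hi.trans_le hc), Nat.mod_eq_of_lt (hj.trans_le hc)] using
    congrArg Fin.val hij

/-- Moment bound for averages of exchangeable nonnegative integer-valued random
variables: there is a constant `C` depending only on `k` such that
`E[((1/m) Σ_j X_j)^k] ≤ C (Σ_{k'=1}^{k-1} m^{k'-k} E[X_1^k ⋯ X_{k'}^k] + E[X_1 ⋯ X_k])`. -/
theorem exchangeable_average_moment_bound (k : ℕ) (hk : 1 ≤ k) :
    ∃ C : ENNReal, C ≠ ⊤ ∧ 0 < C ∧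
      ∀ (n m : ℕ) (hm : k ≤ m), m ≤ n → k ≤ n →
      ∀ (Ω : Type) [MeasurableSpace Ω] (P : Measure Ω), IsProbabilityMeasure P →
      ∀ (X : Fin m → Ω → ℕ), (∀ i, Measurable (X i)) →
      (∀ σ : Equiv.Perm (Fin m),
        Measure.map (fun ω => fun i => X (σ i) ω) P =
          Measure.map (fun ω => fun i => X i ω) P) →
      (∫⁻ ω, ((m : ENNReal)⁻¹ * ∑ j, (X j ω : ENNReal)) ^ k ∂P) ≤
        C * ((∑ k' ∈ Finset.Icc 1 (k - 1), (m : ENNReal) ^ ((k' : ℤ) - (k : ℤ)) *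
                ∫⁻ ω, (∏ i ∈ Finset.range k',
                  ((X ⟨i % m, Nat.mod_lt i (by omega)⟩ ω : ENNReal)) ^ k) ∂P)
          + ∫⁻ ω, (∏ i : Fin k, ((X (Fin.castLE hm i) ω : ENNReal))) ∂P) := by
  refine ⟨(k : ℝ≥0∞) ^ k, by simp, ENNReal.pow_pos (by exact_mod_cast hk) k, ?_⟩
  intro n m hm _ _ Ω _ P _ X hXm hX
  replace hX : IsExchangeable P X := hX
  set A : ℕ → ℝ≥0∞ := fun c => ∫⁻ ω, ∏ i ∈ range c,
    (X ⟨i % m, Nat.mod_lt i (by omega)⟩ ω : ℝ≥0∞) ^ k ∂P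
  set B := ∫⁻ ω, ∏ i : Fin k, (X (Fin.castLE hm i) ω : ℝ≥0∞) ∂P
  have hA (g : Fin k → Fin m) : ∫⁻ ω, ∏ i, (X (g i) ω : ℝ≥0∞) ∂P ≤ A #(univ.image g) := by
    calc _ ≤ ∫⁻ ω, ∏ j ∈ univ.image g, (X j ω : ℝ≥0∞) ^ k ∂P := lintegral_mono fun ω => by
          norm_cast
          exact Nat.cast_le.2 (prod_comp_le_prod_image_pow (X · ω) g (Fintype.card_fin k).le)
      _ = A _ := hX.lintegral_prod_comp_eq hXm (f := fun x : ℕ => (x : ℝ≥0∞) ^ k)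
          (by fun_prop) (Set.injOn_id _)
          (injOn_mod_range (by omega) ((card_le_univ _).trans_eq (Fintype.card_fin m)))
          (card_range _).symm
  have hB (g : Fin k → Fin m) (hg : Function.Injective g) :
      ∫⁻ ω, ∏ i, (X (g i) ω : ℝ≥0∞) ∂P = B :=
    hX.lintegral_prod_comp_eq hXm (f := fun x : ℕ => (x : ℝ≥0∞)) (by fun_prop)
      hg.injOn (Fin.castLE_injective hm).injOn rfl
  calc _ = (m : ℝ≥0∞)⁻¹ ^ k * ∑ g : Fin k → Fin m, ∫⁻ ω, ∏ i, (X (g i) ω : ℝ≥0∞) ∂P :=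
        lintegral_const_mul_sum_pow (fun j => by fun_prop) _ _
    _ ≤ _ := by
      have : Nonempty (Fin m) := ⟨⟨0, by omega⟩⟩
      have := inv_pow_mul_sum_le_of_le_card_image (ι := Fin m) hk _ A B hA fun g hg => (hB g hg).le
      rwa [Fintype.card_fin] at this
end

section
/- Let h : ℝ≥0 → ℝ be Hölder continuous with exponent β ∈ (0,1] and constant H, with h(0) = 0, extended by 0 to negative reals. Let f : ℝ≥0 → ℝ be locally bounded and let (gₙ)ₙ be a sequence in the Skorokhod space D(ℝ≥0, ℝ) converging locally uniformly to g. Then the functions cₙ(t) = ∫₀ᵗ h(t−z) f(z) gₙ(z) dz converge locally uniformly on ℝ≥0 to c(t) = ∫₀ᵗ h(t−z) f(z) g(z) dz, and moreover each cₙ is continuous with modulus of continuity |cₙ(t+δ) − cₙ(t)| ≤ (t+δ) H (sup_{[0,t+δ]}|f|) (sup_{[0,t+δ]}|gₙ|) δ^β. -/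
open MeasureTheory

/-- Continuity of the convolution map `g ↦ (t ↦ ∫₀ᵗ h(t−z) f(z) g(z) dz)` for a
Hölder kernel `h` with `h(0)=0` (extended by `0` on negatives): locally uniform
convergence of `gₙ → g` implies locally uniform convergence of the convolutions,
together with the uniform modulus of continuity
`|cₙ(t+δ) − cₙ(t)| ≤ (t+δ) H Mf Mg δ^β`. -/
theorem convolution_holder_continuity
    (h f g : ℝ → ℝ) (gs : ℕ → ℝ → ℝ) (H β : ℝ)
    (hβ0 : 0 < β) (hβ1 : β ≤ 1) (hH : 0 ≤ H)
    (hh0 : h 0 = 0)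
    (hHol : ∀ t s : ℝ, 0 ≤ t → 0 ≤ s → |h t - h s| ≤ H * |t - s| ^ β)
    (hneg : ∀ x : ℝ, x < 0 → h x = 0)
    (hf_meas : Measurable f)
    (hf_loc : ∀ θ : ℝ, 0 ≤ θ → ∃ B : ℝ, ∀ z ∈ Set.Icc (0 : ℝ) θ, |f z| ≤ B)
    (hg_meas : ∀ n, Measurable (gs n)) (hg0_meas : Measurable g)
    (hg_loc : ∀ n, ∀ θ : ℝ, 0 ≤ θ → ∃ B : ℝ, ∀ z ∈ Set.Icc (0 : ℝ) θ, |gs n z| ≤ B)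
    (hconv : ∀ θ : ℝ, 0 ≤ θ →
      TendstoUniformlyOn gs g Filter.atTop (Set.Icc (0 : ℝ) θ)) :
    (∀ θ : ℝ, 0 ≤ θ →
      TendstoUniformlyOn (fun n t => ∫ z in (0:ℝ)..t, h (t - z) * f z * gs n z)
        (fun t => ∫ z in (0:ℝ)..t, h (t - z) * f z * g z)
        Filter.atTop (Set.Icc (0 : ℝ) θ)) ∧
    (∀ (n : ℕ) (t δ Mf Mg : ℝ), 0 ≤ t → 0 ≤ δ →
      (∀ z ∈ Set.Icc (0 : ℝ) (t + δ), |f z| ≤ Mf) →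
      (∀ z ∈ Set.Icc (0 : ℝ) (t + δ), |gs n z| ≤ Mg) →
      |(∫ z in (0:ℝ)..(t + δ), h (t + δ - z) * f z * gs n z) -
          ∫ z in (0:ℝ)..t, h (t - z) * f z * gs n z| ≤
        (t + δ) * H * Mf * Mg * δ ^ β) := by
  -- Hölder on all of ℝ (using the extension by 0 and `h 0 = 0`).
  have hHol' : ∀ t s : ℝ, |h t - h s| ≤ H * |t - s| ^ β := by
    intro t s
    rcases le_or_gt 0 t with ht | ht <;> rcases le_or_gt 0 s with hs | hs
    · exact hHol t s ht hs
    · rw [hneg s hs, sub_zero]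
      have h1 : |h t - h 0| ≤ H * |t - 0| ^ β := hHol t 0 ht le_rfl
      rw [hh0, sub_zero, sub_zero] at h1
      refine h1.trans (mul_le_mul_of_nonneg_left ?_ hH)
      exact Real.rpow_le_rpow (abs_nonneg _) (by rw [abs_of_nonneg ht]; rw [abs_of_nonneg (by linarith : (0:ℝ) ≤ t - s)]; linarith) hβ0.le
    · rw [hneg t ht]
      have h1 : |h s - h 0| ≤ H * |s - 0| ^ β := hHol s 0 hs le_rfl
      rw [hh0, sub_zero, sub_zero] at h1
      rw [zero_sub, abs_neg]
      refine h1.trans (mul_le_mul_of_nonneg_left ?_ hH)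
      refine Real.rpow_le_rpow (abs_nonneg _) ?_ hβ0.le
      rw [abs_of_nonneg hs, abs_of_nonpos (by linarith : t - s ≤ 0)]; linarith
    · rw [hneg t ht, hneg s hs, sub_zero, abs_zero]
      positivity
  -- `h` is continuous, hence measurable.
  have hcont : Continuous h := by
    rw [continuous_iff_continuousAt]
    intro x
    have hlim : Filter.Tendsto (fun y => h y - h x) (nhds x) (nhds 0) := by
      apply squeeze_zero_norm (fun y => hHol' y x)
      have : Filter.Tendsto (fun y : ℝ => H * |y - x| ^ β) (nhds x) (nhds (H * |x - x| ^ β + 0)) := by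
        rw [add_zero]
        apply Filter.Tendsto.mul tendsto_const_nhds
        apply Filter.Tendsto.rpow_const
        · exact (continuous_abs.comp (continuous_id.sub continuous_const)).tendsto x
        · right; exact hβ0.le
      simpa [Real.zero_rpow hβ0.ne'] using this
    have : Filter.Tendsto (fun y => (h y - h x) + h x) (nhds x) (nhds (0 + h x)) :=
      hlim.add tendsto_const_nhds
    simpa [ContinuousAt] using this
  have hmeas : Measurable h := hcont.measurable
  -- integrability of measurable functions bounded on an interval
  have key_int : ∀ (u : ℝ → ℝ) (a b : ℝ), a ≤ b → Measurable u →
      (∃ C, ∀ z ∈ Set.Icc a b, |u z| ≤ C) → IntervalIntegrable u volume a b := by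
    intro u a b hab hu ⟨C, hC⟩
    rw [intervalIntegrable_iff, Set.uIoc_of_le hab]
    apply Measure.integrableOn_of_bounded (M := C) (measure_Ioc_lt_top).ne
      hu.aestronglyMeasurable
    refine (ae_restrict_iff' measurableSet_Ioc).2 (Filter.Eventually.of_forall ?_)
    intro z hz
    exact hC z ⟨hz.1.le, hz.2⟩
  -- bound on kernel: |h y| ≤ H * |y|^β
  have hker : ∀ y : ℝ, |h y| ≤ H * |y| ^ β := by
    intro y
    have := hHol' y 0
    simpa [hh0] using this
  constructor
  · -- uniform convergence
    intro θ hθ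
    obtain ⟨Bf, hBf⟩ := hf_loc θ hθ
    have hBf0 : 0 ≤ Bf := le_trans (abs_nonneg _) (hBf 0 ⟨le_rfl, hθ⟩)
    -- bound on g on [0, θ]
    obtain ⟨Bg, hBg⟩ : ∃ Bg : ℝ, ∀ z ∈ Set.Icc (0:ℝ) θ, |g z| ≤ Bg := by
      have := (Metric.tendstoUniformlyOn_iff.1 (hconv θ hθ)) 1 one_pos
      obtain ⟨n, hn⟩ := this.exists
      obtain ⟨Bn, hBn⟩ := hg_loc n θ hθ
      refine ⟨Bn + 1, fun z hz => ?_⟩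
      have h1 := hn z hz
      have h2 := hBn z hz
      rw [Real.dist_eq] at h1
      calc |g z| = |(g z - gs n z) + gs n z| := by ring_nf
        _ ≤ |g z - gs n z| + |gs n z| := abs_add_le _ _
        _ ≤ Bn + 1 := by linarith [le_of_lt h1]
    -- kernel bound on the relevant range
    have hkerθ : ∀ t z : ℝ, t ∈ Set.Icc (0:ℝ) θ → z ∈ Set.Icc (0:ℝ) t →
        |h (t - z)| ≤ H * θ ^ β := by
      intro t z ht hz
      refine (hker (t - z)).trans (mul_le_mul_of_nonneg_left ?_ hH)
      refine Real.rpow_le_rpow (abs_nonneg _) ?_ hβ0.le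
      rw [abs_of_nonneg (by linarith [hz.2] : (0:ℝ) ≤ t - z)]
      linarith [hz.1, ht.2]
    -- integrability of the integrands
    have hint : ∀ (k : ℝ → ℝ), Measurable k → (∀ z ∈ Set.Icc (0:ℝ) θ, |k z| ≤ Bg + (Bg+1)) →
        True := fun _ _ _ => trivial
    rw [Metric.tendstoUniformlyOn_iff]
    intro ε hε
    set K : ℝ := θ * (H * θ ^ β * Bf) + 1 with hK
    have hK0 : 0 < K := by positivity
    have hconvK := (Metric.tendstoUniformlyOn_iff.1 (hconv θ hθ)) (ε / K) (by positivity)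
    filter_upwards [hconvK] with n hn
    intro t ht
    -- integrability of each integrand on [0, t]
    obtain ⟨Bn, hBn⟩ := hg_loc n θ hθ
    have hsub : ∀ z ∈ Set.Icc (0:ℝ) t, z ∈ Set.Icc (0:ℝ) θ := fun z hz =>
      ⟨hz.1, hz.2.trans ht.2⟩
    have intg : IntervalIntegrable (fun z => h (t - z) * f z * g z) volume 0 t := by
      refine key_int _ 0 t ht.1 (((hmeas.comp (measurable_const.sub measurable_id)).mul hf_meas).mul hg0_meas) ⟨H * θ ^ β * Bf * Bg, fun z hz => ?_⟩
      rw [abs_mul, abs_mul]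
      have h1 := hkerθ t z ht hz
      have h2 := hBf z (hsub z hz)
      have h3 := hBg z (hsub z hz)
      exact mul_le_mul (mul_le_mul h1 h2 (abs_nonneg _) (by positivity)) h3 (abs_nonneg _) (by positivity)
    have intgs : IntervalIntegrable (fun z => h (t - z) * f z * gs n z) volume 0 t := by
      refine key_int _ 0 t ht.1 (((hmeas.comp (measurable_const.sub measurable_id)).mul hf_meas).mul (hg_meas n)) ⟨H * θ ^ β * Bf * Bn, fun z hz => ?_⟩
      rw [abs_mul, abs_mul]
      have h1 := hkerθ t z ht hz
      have h2 := hBf z (hsub z hz)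
      have h3 := hBn z (hsub z hz)
      exact mul_le_mul (mul_le_mul h1 h2 (abs_nonneg _) (by positivity)) h3 (abs_nonneg _) (by positivity)
    rw [Real.dist_eq, ← intervalIntegral.integral_sub intg intgs]
    have hbound : ∀ z ∈ Set.uIoc (0:ℝ) t,
        ‖h (t - z) * f z * g z - h (t - z) * f z * gs n z‖ ≤ H * θ ^ β * Bf * (ε / K) := by
      intro z hz
      rw [Set.uIoc_of_le ht.1] at hz
      have hzIcc : z ∈ Set.Icc (0:ℝ) t := ⟨hz.1.le, hz.2⟩
      have heq : h (t - z) * f z * g z - h (t - z) * f z * gs n z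
          = h (t - z) * f z * (g z - gs n z) := by ring
      rw [heq, Real.norm_eq_abs, abs_mul, abs_mul]
      have h1 := hkerθ t z ht hzIcc
      have h2 := hBf z (hsub z hzIcc)
      have h3 : |g z - gs n z| ≤ ε / K := by
        have := hn z (hsub z hzIcc)
        rw [Real.dist_eq] at this
        exact this.le
      exact mul_le_mul (mul_le_mul h1 h2 (abs_nonneg _) (by positivity)) h3 (abs_nonneg _) (by positivity)
    have := intervalIntegral.norm_integral_le_of_norm_le_const hbound
    rw [Real.norm_eq_abs] at this
    calc |∫ z in (0:ℝ)..t, (h (t - z) * f z * g z - h (t - z) * f z * gs n z)|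
        ≤ H * θ ^ β * Bf * (ε / K) * |t - 0| := this
      _ ≤ H * θ ^ β * Bf * (ε / K) * θ := by
          refine mul_le_mul_of_nonneg_left ?_ (by positivity)
          rw [sub_zero, abs_of_nonneg ht.1]; exact ht.2
      _ = (θ * (H * θ ^ β * Bf)) * (ε / K) := by ring
      _ < K * (ε / K) := by
          refine mul_lt_mul_of_pos_right ?_ (by positivity)
          rw [hK]; linarith
      _ = ε := by field_simp
  · -- modulus of continuity
    intro n t δ Mf Mg ht hδ hMf hMg
    have htδ : (0:ℝ) ≤ t + δ := by linarith
    have hMf0 : 0 ≤ Mf := le_trans (abs_nonneg _) (hMf 0 ⟨le_rfl, htδ⟩)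
    have hMg0 : 0 ≤ Mg := le_trans (abs_nonneg _) (hMg 0 ⟨le_rfl, htδ⟩)
    set A : ℝ → ℝ := fun z => h (t + δ - z) * f z * gs n z with hA
    set Bfun : ℝ → ℝ := fun z => h (t - z) * f z * gs n z with hBfun
    have mA : Measurable A :=
      ((hmeas.comp (measurable_const.sub measurable_id)).mul hf_meas).mul (hg_meas n)
    have mB : Measurable Bfun :=
      ((hmeas.comp (measurable_const.sub measurable_id)).mul hf_meas).mul (hg_meas n)
    have hCb : ∀ y : ℝ, |y| ≤ t + δ → |h y| ≤ H * (t + δ) ^ β := by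
      intro y hy
      exact (hker y).trans (mul_le_mul_of_nonneg_left
        (Real.rpow_le_rpow (abs_nonneg _) hy hβ0.le) hH)
    have intA : IntervalIntegrable A volume 0 (t + δ) := by
      refine key_int _ 0 (t + δ) htδ mA ⟨H * (t + δ) ^ β * Mf * Mg, fun z hz => ?_⟩
      rw [hA]; simp only
      rw [abs_mul, abs_mul]
      have h1 : |h (t + δ - z)| ≤ H * (t + δ) ^ β := by
        apply hCb
        rw [abs_of_nonneg (by linarith [hz.2] : (0:ℝ) ≤ t + δ - z)]
        linarith [hz.1]
      exact mul_le_mul (mul_le_mul h1 (hMf z hz) (abs_nonneg _) (by positivity))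
        (hMg z hz) (abs_nonneg _) (by positivity)
    have intB : IntervalIntegrable Bfun volume 0 (t + δ) := by
      refine key_int _ 0 (t + δ) htδ mB ⟨H * (t + δ) ^ β * Mf * Mg, fun z hz => ?_⟩
      rw [hBfun]; simp only
      rw [abs_mul, abs_mul]
      have h1 : |h (t - z)| ≤ H * (t + δ) ^ β := by
        apply hCb
        rw [abs_sub_comm] at *
        rcases le_or_gt z t with hzt | hzt
        · rw [abs_of_nonpos (by linarith : z - t ≤ 0)]; linarith [hz.1]
        · rw [abs_of_nonneg (by linarith : (0:ℝ) ≤ z - t)]; linarith [hz.2]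
      exact mul_le_mul (mul_le_mul h1 (hMf z hz) (abs_nonneg _) (by positivity))
        (hMg z hz) (abs_nonneg _) (by positivity)
    -- extend the second integral to [0, t+δ]
    have intB1 : IntervalIntegrable Bfun volume 0 t :=
      intB.mono_set (by rw [Set.uIcc_of_le ht, Set.uIcc_of_le htδ]; exact Set.Icc_subset_Icc le_rfl (by linarith))
    have intB2 : IntervalIntegrable Bfun volume t (t + δ) :=
      intB.mono_set (by rw [Set.uIcc_of_le (by linarith : t ≤ t + δ), Set.uIcc_of_le htδ]; exact Set.Icc_subset_Icc ht le_rfl)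
    have hzero : (∫ z in t..(t + δ), Bfun z) = 0 := by
      rw [show (0:ℝ) = ∫ z in t..(t+δ), (0:ℝ) by simp]
      apply intervalIntegral.integral_congr
      intro z hz
      rw [Set.uIcc_of_le (by linarith : t ≤ t + δ)] at hz
      rw [hBfun]; simp only
      rcases eq_or_lt_of_le hz.1 with heq | hlt
      · rw [← heq, sub_self, hh0, zero_mul, zero_mul]
      · rw [hneg (t - z) (by linarith), zero_mul, zero_mul]
    have hext : (∫ z in (0:ℝ)..t, Bfun z) = ∫ z in (0:ℝ)..(t + δ), Bfun z := by
      rw [← intervalIntegral.integral_add_adjacent_intervals intB1 intB2, hzero, add_zero]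
    rw [hext, ← intervalIntegral.integral_sub intA intB]
    have hbound : ∀ z ∈ Set.uIoc (0:ℝ) (t + δ),
        ‖A z - Bfun z‖ ≤ H * δ ^ β * Mf * Mg := by
      intro z hz
      rw [Set.uIoc_of_le htδ] at hz
      have hzIcc : z ∈ Set.Icc (0:ℝ) (t + δ) := ⟨hz.1.le, hz.2⟩
      have heq : A z - Bfun z = (h (t + δ - z) - h (t - z)) * f z * gs n z := by
        rw [hA, hBfun]; ring
      rw [heq, Real.norm_eq_abs, abs_mul, abs_mul]
      have h1 : |h (t + δ - z) - h (t - z)| ≤ H * δ ^ β := by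
        have := hHol' (t + δ - z) (t - z)
        have heq2 : |(t + δ - z) - (t - z)| = δ := by
          rw [show (t + δ - z) - (t - z) = δ by ring, abs_of_nonneg hδ]
        rwa [heq2] at this
      exact mul_le_mul (mul_le_mul h1 (hMf z hzIcc) (abs_nonneg _) (by positivity))
        (hMg z hzIcc) (abs_nonneg _) (by positivity)
    have := intervalIntegral.norm_integral_le_of_norm_le_const hbound
    rw [Real.norm_eq_abs, sub_zero, abs_of_nonneg htδ] at this
    calc |∫ z in (0:ℝ)..(t + δ), (A z - Bfun z)| ≤ H * δ ^ β * Mf * Mg * (t + δ) := this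
      _ = (t + δ) * H * Mf * Mg * δ ^ β := by ring
end
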